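/- arXiv:0810.2673 — 4 statements merged into one kernel-verified Lean document; each statement's English description precedes it below -/
import Mathlib

section
/- Let A and B be unital complex Banach algebras and T : A → B a surjective spectrally bounded linear map, i.e., there is M ≥ 0 with r(Tx) ≤ M·r(x) for all x ∈ A. Then the separating space of T is contained in the Jacobson radical of B. In particular, if B is semisimple then T is continuous. -/
/-!
Write `r` for the spectral radius. Let `y` lie in the separating space, with `xₙ → 0` and
`T xₙ → y = T y₀`, and let `a ∈ A`. The entire pencil `μ ↦ T (a + xₙ) + μ • (y - T xₙ)` equals
`T (a + xₙ + μ • (y₀ - xₙ))`, so on a small circle `|μ| = ρ` its spectral radius is at most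
`M (r a + ε)` by spectral boundedness and upper semicontinuity of `r`; on a circle `|μ| = R` it is
bounded by `‖T a + y‖ + 1` as soon as `‖y - T xₙ‖` is small. Applying Hadamard's three circles
theorem to its powers and using Gelfand's formula, `r (T a + y)` is at most an interpolation of
the two bounds whose weight on the outer circle tends to `0` as `R → ∞`. Hence
`r (T a + y) ≤ M r a`.

By surjectivity, `z ↦ r (b + z • y)` is then bounded for every `b ∈ B`, and the same argument gives
`r (b + y) ≤ r b`. So `y` and all `u y u⁻¹ - y` (`u` a unit) are quasinilpotent, and such a `y`
lies in every maximal left ideal `L`: if `ℓ y ∉ L` for some `ℓ ∈ L`, a unit `u = 1 + s a` with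
`a ∈ L`, `a y - 1 ∈ L` makes `s` a spectral value of `u y u⁻¹ - y`; otherwise right
multiplication by `y` is a bounded `B`-linear operator on the simple module `B ⧸ L`, so by Schur's
lemma it is a scalar `μ` in its spectrum, `y - μ ∈ L`, and `μ = 0` because `r y = 0`.
-/

open scoped ENNReal NNReal Topology
open Filter

namespace SpectrallyBounded

section SeparatingSpace

variable {R E F : Type*} [Semiring R] [AddCommMonoid E] [Module R E] [TopologicalSpace E]
  [AddCommMonoid F] [Module R F] [TopologicalSpace F]

def separatingSpace (T : E →ₗ[R] F) : Set F :=
  {y | ∃ x : ℕ → E, Tendsto x atTop (𝓝 0) ∧ Tendsto (fun n => T (x n)) atTop (𝓝 y)}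

lemma smul_mem_separatingSpace [ContinuousConstSMul R E] [ContinuousConstSMul R F]
    {T : E →ₗ[R] F} {y : F} (hy : y ∈ separatingSpace T) (c : R) :
    c • y ∈ separatingSpace T := by
  obtain ⟨x, hx0, hTx⟩ := hy
  refine ⟨fun n => c • x n, by simpa using hx0.const_smul c, ?_⟩
  simpa using hTx.const_smul c

end SeparatingSpace

lemma continuous_of_separatingSpace_subset {𝕜 E F : Type*} [NontriviallyNormedField 𝕜]
    [NormedAddCommGroup E] [NormedSpace 𝕜 E] [CompleteSpace E]
    [NormedAddCommGroup F] [NormedSpace 𝕜 F] [CompleteSpace F]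
    (T : E →ₗ[𝕜] F) (h : separatingSpace T ⊆ {0}) : Continuous T := by
  refine T.continuous_of_seq_closed_graph fun u x y hu hTu => ?_
  have hsep : y - T x ∈ separatingSpace T :=
    ⟨fun n => u n - x, by simpa using hu.sub_const x, by simpa using hTu.sub_const (T x)⟩
  exact sub_eq_zero.mp (h hsep)

section RealSpectralRadius

variable {B : Type*} [NormedRing B] [NormedAlgebra ℂ B]

/-- `toReal` would send `∞` to `0`, but in a Banach algebra the spectral radius is finite
(`spectralRadius_ne_top`). -/
noncomputable def realSpectralRadius (b : B) : ℝ := (spectralRadius ℂ b).toReal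

lemma realSpectralRadius_nonneg (b : B) : 0 ≤ realSpectralRadius b := ENNReal.toReal_nonneg

@[simp]
lemma realSpectralRadius_units_conjugate (u : Bˣ) (b : B) :
    realSpectralRadius (u * b * ↑u⁻¹) = realSpectralRadius b := by
  simp [realSpectralRadius, spectralRadius]

@[simp]
lemma realSpectralRadius_zero : realSpectralRadius (0 : B) = 0 := by
  simp [realSpectralRadius]

variable [CompleteSpace B] [NormOneClass B]

lemma spectralRadius_ne_top (b : B) : spectralRadius ℂ b ≠ ⊤ :=
  ne_top_of_le_ne_top ENNReal.coe_ne_top (spectrum.spectralRadius_le_nnnorm b)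

lemma norm_le_realSpectralRadius {b : B} {μ : ℂ} (hμ : μ ∈ spectrum ℂ b) :
    ‖μ‖ ≤ realSpectralRadius b := by
  have : (‖μ‖₊ : ℝ≥0∞) ≤ spectralRadius ℂ b := le_iSup₂ (α := ℝ≥0∞) μ hμ
  simpa [realSpectralRadius] using ENNReal.toReal_mono (spectralRadius_ne_top b) this

lemma realSpectralRadius_le_norm (b : B) : realSpectralRadius b ≤ ‖b‖ := by
  simpa [realSpectralRadius] using
    ENNReal.toReal_mono ENNReal.coe_ne_top (spectrum.spectralRadius_le_nnnorm (𝕜 := ℂ) b)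

lemma realSpectralRadius_pow_le (b : B) {n : ℕ} (hn : n ≠ 0) :
    realSpectralRadius b ^ n ≤ ‖b ^ n‖ := by
  have h := (spectrum.spectralRadius_pow_le (𝕜 := ℂ) b n hn).trans
    (spectrum.spectralRadius_le_nnnorm (b ^ n))
  simpa [realSpectralRadius, ENNReal.toReal_pow] using ENNReal.toReal_mono ENNReal.coe_ne_top h

lemma realSpectralRadius_le_of_norm_pow_le {b : B} {n : ℕ} (hn : n ≠ 0) {c : ℝ} (hc : 0 ≤ c)
    (h : ‖b ^ n‖ ≤ c ^ n) : realSpectralRadius b ≤ c :=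
  le_of_pow_le_pow_left₀ hn hc ((realSpectralRadius_pow_le b hn).trans h)

lemma realSpectralRadius_lt_of_norm_pow_lt {b : B} {n : ℕ} (hn : n ≠ 0) {c : ℝ} (hc : 0 ≤ c)
    (h : ‖b ^ n‖ < c ^ n) : realSpectralRadius b < c :=
  lt_of_pow_lt_pow_left₀ n hc ((realSpectralRadius_pow_le b hn).trans_lt h)

lemma tendsto_norm_pow_rpow_realSpectralRadius (b : B) :
    Tendsto (fun n : ℕ => ‖b ^ n‖ ^ (1 / n : ℝ)) atTop (𝓝 (realSpectralRadius b)) := by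
  have := (ENNReal.tendsto_toReal (spectralRadius_ne_top b)).comp
    (spectrum.pow_norm_pow_one_div_tendsto_nhds_spectralRadius b)
  refine this.congr fun n => ?_
  simp [Function.comp_apply, ENNReal.toReal_ofReal, Real.rpow_nonneg (norm_nonneg _)]

lemma eventually_norm_pow_lt {b : B} {c : ℝ} (h : realSpectralRadius b < c) :
    ∀ᶠ n : ℕ in atTop, ‖b ^ n‖ < c ^ n := by
  filter_upwards [(tendsto_norm_pow_rpow_realSpectralRadius b).eventually_lt_const h,
    eventually_ne_atTop 0] with n hlt hn
  have := pow_lt_pow_left₀ hlt (by positivity) hn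
  rwa [← Real.rpow_natCast, ← Real.rpow_mul (norm_nonneg _), one_div,
    inv_mul_cancel₀ (Nat.cast_ne_zero.mpr hn), Real.rpow_one] at this

lemma upperSemicontinuous_realSpectralRadius :
    UpperSemicontinuous (realSpectralRadius : B → ℝ) := by
  intro b c hc
  obtain ⟨n, hlt, hn⟩ := ((eventually_norm_pow_lt hc).and (eventually_ne_atTop 0)).exists
  have hcont : Continuous fun z : B => ‖z ^ n‖ := by fun_prop
  filter_upwards [hcont.continuousAt.eventually_lt continuousAt_const hlt] with z hz
  exact realSpectralRadius_lt_of_norm_pow_lt hn ((realSpectralRadius_nonneg b).trans hc.le) hz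

end RealSpectralRadius

lemma realSpectralRadius_le_mul_of_spectralRadius_le {A B : Type*} [NormedRing A]
    [NormedAlgebra ℂ A] [CompleteSpace A] [NormOneClass A] [NormedRing B] [NormedAlgebra ℂ B]
    {a : A} {b : B} {M : ℝ≥0}
    (h : spectralRadius ℂ b ≤ M * spectralRadius ℂ a) :
    realSpectralRadius b ≤ M * realSpectralRadius a := by
  simpa [realSpectralRadius, ENNReal.toReal_mul] using
    ENNReal.toReal_mono (ENNReal.mul_ne_top ENNReal.coe_ne_top (spectralRadius_ne_top a)) h

lemma norm_pow_le_pow_of_dvd {B : Type*} [SeminormedRing B] [NormOneClass B] {b : B} {c : ℝ}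
    {n m : ℕ} (h : ‖b ^ n‖ ≤ c ^ n) (hnm : n ∣ m) : ‖b ^ m‖ ≤ c ^ m := by
  obtain ⟨k, rfl⟩ := hnm
  rw [pow_mul, pow_mul]
  exact (norm_pow_le _ k).trans (pow_le_pow_left₀ (norm_nonneg _) h k)

section ThreeCircles

variable {B : Type*} [NormedRing B] [NormedAlgebra ℂ B] [CompleteSpace B] [NormOneClass B]

lemma _root_.IsCompact.exists_norm_pow_le_of_realSpectralRadius_lt {X : Type*} [TopologicalSpace X]
    {K : Set X} (hK : IsCompact K) {f : X → B} (hf : Continuous f) {c : ℝ}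
    (hc : ∀ x ∈ K, realSpectralRadius (f x) < c) :
    ∃ N ≠ 0, ∀ x ∈ K, ∀ m, N ∣ m → ‖f x ^ m‖ ≤ c ^ m := by
  let V : ℕ → Set X := fun n => {x | ‖f x ^ (n + 1)‖ < c ^ (n + 1)}
  have hV : ∀ n, IsOpen (V n) := fun n => isOpen_lt (by fun_prop) continuous_const
  have hcover : K ⊆ ⋃ n, V n := by
    intro x hx
    obtain ⟨n, hlt, hn⟩ := ((eventually_norm_pow_lt (hc x hx)).and (eventually_ne_atTop 0)).exists
    obtain ⟨k, rfl⟩ := Nat.exists_eq_succ_of_ne_zero hn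
    exact Set.mem_iUnion.mpr ⟨k, hlt⟩
  obtain ⟨F, hF⟩ := hK.elim_finite_subcover V hV hcover
  refine ⟨∏ n ∈ F, (n + 1), Finset.prod_ne_zero_iff.mpr fun n _ => n.succ_ne_zero,
    fun x hx m hm => ?_⟩
  obtain ⟨n, hnF, hxn⟩ := Set.mem_iUnion₂.mp (hF hx)
  exact norm_pow_le_pow_of_dvd hxn.le ((Finset.dvd_prod_of_mem _ hnF).trans hm)

open Complex.HadamardThreeLines in
lemma norm_le_of_three_circles {E : Type*} [NormedAddCommGroup E] [NormedSpace ℂ E]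
    {g : ℂ → E} (hg : Differentiable ℂ g) {ρ R P Q : ℝ} (hρ : 0 < ρ) (hρR : ρ < R)
    (hP : ∀ μ : ℂ, ‖μ‖ = ρ → ‖g μ‖ ≤ P) (hQ : ∀ μ : ℂ, ‖μ‖ = R → ‖g μ‖ ≤ Q)
    {z : ℂ} (hρz : ρ ≤ ‖z‖) (hzR : ‖z‖ ≤ R) :
    ‖g z‖ ≤ P ^ (1 - (Real.log ‖z‖ - Real.log ρ) / (Real.log R - Real.log ρ)) *
      Q ^ ((Real.log ‖z‖ - Real.log ρ) / (Real.log R - Real.log ρ)) := by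
  have hz : 0 < ‖z‖ := hρ.trans_le hρz
  have hbdd :
      BddAbove ((norm ∘ g ∘ Complex.exp) '' verticalClosedStrip (Real.log ρ) (Real.log R)) := by
    refine ((isCompact_closedBall (0 : ℂ) R).image
      (continuous_norm.comp hg.continuous)).bddAbove.mono ?_
    rintro _ ⟨ζ, hζ, rfl⟩
    refine ⟨Complex.exp ζ, ?_, rfl⟩
    rw [mem_closedBall_zero_iff, Complex.norm_exp, ← Real.exp_log (hρ.trans hρR)]
    exact Real.exp_le_exp.mpr hζ.2
  have key := norm_le_interp_of_mem_verticalClosedStrip' (Real.log_lt_log hρ hρR)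
    (z := Complex.log z) ⟨by simpa [Complex.log_re] using Real.log_le_log hρ hρz,
      by simpa [Complex.log_re] using Real.log_le_log hz hzR⟩
    (hg.comp Complex.differentiable_exp).diffContOnCl hbdd
    (fun ζ hζ => hP _ (by simp_all [Complex.norm_exp, Real.exp_log hρ]))
    (fun ζ hζ => hQ _ (by simp_all [Complex.norm_exp, Real.exp_log (hρ.trans hρR)]))
  simpa [Complex.exp_log (norm_pos_iff.mp hz), Complex.log_re] using key

lemma realSpectralRadius_le_of_three_circles {f : ℂ → B} (hf : Differentiable ℂ f)
    {ρ R P Q : ℝ} (hρ : 0 < ρ) (hρR : ρ < R)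
    (hP : ∀ μ : ℂ, ‖μ‖ = ρ → realSpectralRadius (f μ) < P)
    (hQ : ∀ μ : ℂ, ‖μ‖ = R → realSpectralRadius (f μ) < Q)
    {z : ℂ} (hρz : ρ ≤ ‖z‖) (hzR : ‖z‖ ≤ R) :
    realSpectralRadius (f z) ≤ P ^ (1 - (Real.log ‖z‖ - Real.log ρ) / (Real.log R - Real.log ρ)) *
      Q ^ ((Real.log ‖z‖ - Real.log ρ) / (Real.log R - Real.log ρ)) := by
  have hR : 0 < R := hρ.trans hρR
  have hP0 : 0 ≤ P := (realSpectralRadius_nonneg _).trans (hP ρ (by simp [hρ.le])).le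
  have hQ0 : 0 ≤ Q := (realSpectralRadius_nonneg _).trans (hQ R (by simp [hR.le])).le
  obtain ⟨N₁, hN₁, h₁⟩ := (isCompact_sphere (0 : ℂ) ρ).exists_norm_pow_le_of_realSpectralRadius_lt
    hf.continuous fun μ hμ => hP μ (mem_sphere_zero_iff_norm.mp hμ)
  obtain ⟨N₂, hN₂, h₂⟩ := (isCompact_sphere (0 : ℂ) R).exists_norm_pow_le_of_realSpectralRadius_lt
    hf.continuous fun μ hμ => hQ μ (mem_sphere_zero_iff_norm.mp hμ)
  refine realSpectralRadius_le_of_norm_pow_le (mul_ne_zero hN₁ hN₂) (by positivity) ?_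
  rw [mul_pow, Real.rpow_pow_comm hP0, Real.rpow_pow_comm hQ0]
  exact norm_le_of_three_circles (hf.fun_pow _) hρ hρR
    (fun μ hμ => h₁ μ (mem_sphere_zero_iff_norm.mpr hμ) _ (dvd_mul_right _ _))
    (fun μ hμ => h₂ μ (mem_sphere_zero_iff_norm.mpr hμ) _ (dvd_mul_left _ _)) hρz hzR

lemma realSpectralRadius_le_of_forall_circle {v : B} {ρ P Q : ℝ} (hρ : 0 < ρ) (hρ1 : ρ < 1)
    (h : ∀ R > 1, ∃ f : ℂ → B, Differentiable ℂ f ∧ f 1 = v ∧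
      (∀ μ : ℂ, ‖μ‖ = ρ → realSpectralRadius (f μ) ≤ P) ∧
      ∀ μ : ℂ, ‖μ‖ = R → realSpectralRadius (f μ) ≤ Q) :
    realSpectralRadius v ≤ P := by
  refine le_of_forall_pos_le_add fun ε hε => ?_
  obtain ⟨f, -, -, hfρ, hfR⟩ := h 2 one_lt_two
  have hP0 : 0 ≤ P := (realSpectralRadius_nonneg _).trans (hfρ ρ (by simp [hρ.le]))
  have hQ0 : 0 ≤ Q := (realSpectralRadius_nonneg _).trans (hfR 2 (by simp))
  -- the weight of the outer circle in the three circles bound at `μ = 1`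
  let θ : ℝ → ℝ := fun R => (0 - Real.log ρ) / (Real.log R - Real.log ρ)
  have hθ : Tendsto θ atTop (𝓝 0) :=
    tendsto_const_nhds.div_atTop (tendsto_atTop_add_const_right _ _ Real.tendsto_log_atTop)
  have hbound : Tendsto (fun R => (P + ε) ^ (1 - θ R) * (Q + 1) ^ θ R) atTop (𝓝 (P + ε)) := by
    have hcont : Continuous fun t : ℝ => (P + ε) ^ (1 - t) * (Q + 1) ^ t := by
      fun_prop (disch := positivity)
    simpa [Function.comp_def] using (hcont.tendsto 0).comp hθ
  refine ge_of_tendsto hbound ((eventually_gt_atTop 1).mono fun R hR => ?_)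
  obtain ⟨f, hf, rfl, hfρ, hfR⟩ := h R hR
  simpa [θ] using realSpectralRadius_le_of_three_circles hf hρ (hρ1.trans hR)
    (fun μ hμ => (hfρ μ hμ).trans_lt (by linarith)) (fun μ hμ => (hfR μ hμ).trans_lt (by linarith))
    (z := 1) (by simpa using hρ1.le) (by simpa using hR.le)

end ThreeCircles

lemma exists_sphere_subset_of_eventually {p : ℂ → Prop} (h : ∀ᶠ μ in 𝓝 0, p μ) :
    ∃ ρ : ℝ, 0 < ρ ∧ ρ < 1 ∧ ∀ μ : ℂ, ‖μ‖ = ρ → p μ := by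
  obtain ⟨δ, hδ, hball⟩ := Metric.eventually_nhds_iff.mp h
  refine ⟨min (δ / 2) (1 / 2), by positivity, by linarith [min_le_right (δ / 2) (1 / 2)],
    fun μ hμ => hball ?_⟩
  rw [dist_zero_right, hμ]
  linarith [min_le_left (δ / 2) (1 / 2)]

section Estimates

variable {A B : Type*} [NormedRing A] [NormedAlgebra ℂ A] [CompleteSpace A] [NormOneClass A]
  [NormedRing B] [NormedAlgebra ℂ B] [CompleteSpace B] [NormOneClass B]

lemma realSpectralRadius_add_le_of_forall_le {b y : B} {K : ℝ}
    (hK : ∀ z : ℂ, realSpectralRadius (b + z • y) ≤ K) :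
    realSpectralRadius (b + y) ≤ realSpectralRadius b := by
  refine le_of_forall_gt_imp_ge_of_dense fun c hc => ?_
  have hnear : ∀ᶠ μ : ℂ in 𝓝 0, realSpectralRadius (b + μ • y) < c := by
    have hcont : Tendsto (fun μ : ℂ => b + μ • y) (𝓝 0) (𝓝 b) := by
      simpa using (show Continuous fun μ : ℂ => b + μ • y by fun_prop).tendsto 0
    exact hcont.eventually (upperSemicontinuous_realSpectralRadius b c hc)
  obtain ⟨ρ, hρ0, hρ1, hρ⟩ := exists_sphere_subset_of_eventually hnear
  exact realSpectralRadius_le_of_forall_circle hρ0 hρ1 fun R _ =>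
    ⟨fun μ => b + μ • y, by fun_prop, by simp, fun μ hμ => (hρ μ hμ).le, fun μ _ => hK μ⟩

lemma realSpectralRadius_add_le_of_mem_separatingSpace {T : A →ₗ[ℂ] B} {M : ℝ≥0}
    (hsb : ∀ x, realSpectralRadius (T x) ≤ M * realSpectralRadius x)
    {y : B} (hy : y ∈ separatingSpace T) (hyT : y ∈ Set.range T) (a : A) :
    realSpectralRadius (T a + y) ≤ M * realSpectralRadius a := by
  obtain ⟨y₀, rfl⟩ := hyT
  obtain ⟨x, hx0, hTx⟩ := hy
  have hlim : Tendsto (fun c : ℝ => (M : ℝ) * c) (𝓝[>] realSpectralRadius a)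
      (𝓝 (M * realSpectralRadius a)) :=
    ((continuous_const_mul _).tendsto _).mono_left nhdsWithin_le_nhds
  refine ge_of_tendsto hlim (eventually_nhdsWithin_of_forall fun c hc => ?_)
  have hnear : ∀ᶠ p : ℂ × A in 𝓝 0 ×ˢ 𝓝 0,
      realSpectralRadius (a + p.2 + p.1 • (y₀ - p.2)) < c := by
    have hcont : Tendsto (fun p : ℂ × A => a + p.2 + p.1 • (y₀ - p.2)) (𝓝 0 ×ˢ 𝓝 0) (𝓝 a) := by
      rw [← nhds_prod_eq]
      simpa using (show Continuous fun p : ℂ × A => a + p.2 + p.1 • (y₀ - p.2) by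
        fun_prop).tendsto (0, 0)
    exact hcont.eventually (upperSemicontinuous_realSpectralRadius a c hc)
  obtain ⟨pμ, hpμ, pA, hpA, hp⟩ := eventually_prod_iff.mp hnear
  obtain ⟨ρ, hρ0, hρ1, hρ⟩ := exists_sphere_subset_of_eventually hpμ
  refine realSpectralRadius_le_of_forall_circle hρ0 hρ1 (Q := ‖T a + T y₀‖ + 1) fun R hR => ?_
  obtain ⟨n, hxn, hdn⟩ := ((hx0.eventually hpA).and
    (hTx.eventually (Metric.closedBall_mem_nhds _ (by positivity : 0 < (R + 1)⁻¹)))).exists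
  refine ⟨fun μ => T (a + x n) + μ • (T y₀ - T (x n)), by fun_prop, by simp, fun μ hμ => ?_,
    fun μ hμ => ?_⟩
  · calc realSpectralRadius (T (a + x n) + μ • (T y₀ - T (x n)))
          = realSpectralRadius (T (a + x n + μ • (y₀ - x n))) := by simp
      _ ≤ M * realSpectralRadius (a + x n + μ • (y₀ - x n)) := hsb _
      _ ≤ M * c := by gcongr; exact (hp (hρ μ hμ) hxn).le
  · have heq : T (a + x n) + μ • (T y₀ - T (x n)) = T a + T y₀ + (1 - μ) • (T (x n) - T y₀) := by
      simp only [map_add, sub_smul, one_smul, smul_sub]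
      abel
    calc realSpectralRadius (T (a + x n) + μ • (T y₀ - T (x n)))
        ≤ ‖T a + T y₀ + (1 - μ) • (T (x n) - T y₀)‖ := heq ▸ realSpectralRadius_le_norm _
      _ ≤ ‖T a + T y₀‖ + ‖1 - μ‖ * ‖T (x n) - T y₀‖ := by rw [← norm_smul]; exact norm_add_le _ _
      _ ≤ ‖T a + T y₀‖ + (R + 1) * (R + 1)⁻¹ := by
          gcongr
          · simpa [hμ, add_comm] using norm_sub_le (1 : ℂ) μ
          · rwa [← dist_eq_norm]
      _ = ‖T a + T y₀‖ + 1 := by rw [mul_inv_cancel₀ (by positivity)]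

end Estimates

lemma mem_spectrum_of_sub_algebraMap_mem {R A : Type*} [CommSemiring R] [Ring A] [Algebra R A]
    {L : Ideal A} (hL : L ≠ ⊤) {a : A} {μ : R} (h : a - algebraMap R A μ ∈ L) :
    μ ∈ spectrum R a := fun hu =>
  hL (L.eq_top_of_isUnit_mem (by simpa using L.neg_mem h) hu)

lemma exists_mem_mul_sub_one_mem {R : Type*} [Ring R] {L : Ideal R} [L.IsMaximal] {ℓ y : R}
    (hℓ : ℓ ∈ L) (hℓy : ℓ * y ∉ L) :
    ∃ a ∈ L, a * y - 1 ∈ L := by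
  have hspan : ¬ Ideal.span {ℓ * y} ≤ L := by
    rwa [Ideal.span, Submodule.span_singleton_le_iff_mem]
  have htop := (Ideal.isMaximal_def.mp ‹_›).2 _ (left_lt_sup.mpr hspan)
  obtain ⟨m, hm, q, hq, hmq⟩ := Submodule.mem_sup.mp (htop ▸ Submodule.mem_top : (1 : R) ∈ _)
  obtain ⟨c, rfl⟩ := Ideal.mem_span_singleton'.mp hq
  refine ⟨c * ℓ, L.mul_mem_left c hℓ, ?_⟩
  rw [mul_assoc, ← hmq, sub_add_cancel_right]
  exact L.neg_mem hm

section MaximalIdeal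

variable {B : Type*} [NormedRing B] [NormedAlgebra ℂ B] [CompleteSpace B] {L : Ideal B}
  [L.IsMaximal]

lemma exists_sub_algebraMap_mem_of_forall_mul_mem {y : B} (hy : ∀ ℓ ∈ L, ℓ * y ∈ L) :
    ∃ μ : ℂ, y - algebraMap ℂ B μ ∈ L := by
  have : Nontrivial (B ⧸ L) := Submodule.Quotient.nontrivial_iff.mpr (Ideal.IsMaximal.ne_top ‹_›)
  have : IsSimpleModule B (B ⧸ L) := isSimpleModule_iff_isCoatom.mpr (Ideal.isMaximal_def.mp ‹_›)
  let D : B ⧸ L →L[B] B ⧸ L := L.liftQL (L.mkQL ∘L ContinuousLinearMap.toSpanSingleton B y)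
    fun ℓ hℓ => by simpa [Submodule.Quotient.mk_eq_zero] using hy ℓ hℓ
  obtain ⟨μ, hμ⟩ := spectrum.nonempty (D.restrictScalars ℂ)
  let G : B ⧸ L →ₗ[B] B ⧸ L := μ • LinearMap.id - D.toLinearMap
  have hG : ⇑G = ⇑(algebraMap ℂ (B ⧸ L →L[ℂ] B ⧸ L) μ - D.restrictScalars ℂ) := by
    ext v; simp [G, Algebra.algebraMap_eq_smul_one]
  refine ⟨μ, ?_⟩
  rcases LinearMap.bijective_or_eq_zero G with hbij | hzero
  · rw [hG, ← ContinuousLinearMap.isUnit_iff_bijective] at hbij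
    exact absurd hbij (spectrum.mem_iff.mp hμ)
  · have h1 : μ • Submodule.Quotient.mk (p := L) 1 - Submodule.Quotient.mk (1 * y) = 0 :=
      LinearMap.congr_fun hzero _
    rw [one_mul, ← Submodule.Quotient.mk_smul, ← Submodule.Quotient.mk_sub,
      Submodule.Quotient.mk_eq_zero] at h1
    simpa [Algebra.algebraMap_eq_smul_one] using L.neg_mem h1

variable [NormOneClass B]

lemma exists_units_realSpectralRadius_conj_sub_pos {ℓ y : B} (hℓ : ℓ ∈ L) (hℓy : ℓ * y ∉ L) :
    ∃ u : Bˣ, 0 < realSpectralRadius (u * y * ↑u⁻¹ - y) := by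
  obtain ⟨a, haL, hay⟩ := exists_mem_mul_sub_one_mem hℓ hℓy
  set s : ℂ := (((‖a‖ + 1)⁻¹ : ℝ) : ℂ) with hs
  have hs0 : s ≠ 0 := Complex.ofReal_ne_zero.mpr (by positivity)
  have hsa : ‖-(s • a)‖ < 1 := by
    rw [norm_neg, norm_smul, hs, Complex.norm_real, Real.norm_of_nonneg (by positivity),
      inv_mul_lt_one₀ (by positivity)]
    linarith
  let u : Bˣ := Units.oneSub _ hsa
  have hu : (u : B) = 1 + s • a := by simp [u]
  set z : B := u * y * ↑u⁻¹
  have hz : z + s • (z * a) = y + s • (a * y) := by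
    have : z * u = u * y := by simp [z, mul_assoc]
    simpa [hu, mul_add, add_mul, mul_smul_comm, smul_mul_assoc] using this
  have hmem : z - y - algebraMap ℂ B s ∈ L := by
    have : z - y - algebraMap ℂ B s = s • (a * y - 1) - s • (z * a) := by
      rw [Algebra.algebraMap_eq_smul_one]
      linear_combination (norm := module) hz
    rw [this]
    exact L.sub_mem (L.smul_of_tower_mem s hay) (L.smul_of_tower_mem s (L.mul_mem_left z haL))
  refine ⟨u, (norm_pos_iff.mpr hs0).trans_le (norm_le_realSpectralRadius ?_)⟩
  exact mem_spectrum_of_sub_algebraMap_mem (Ideal.IsMaximal.ne_top ‹_›) hmem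

end MaximalIdeal

section Jacobson

variable {A B : Type*} [NormedRing A] [NormedAlgebra ℂ A] [CompleteSpace A] [NormOneClass A]
  [NormedRing B] [NormedAlgebra ℂ B] [CompleteSpace B] [NormOneClass B]

theorem mem_jacobson_of_realSpectralRadius_eq_zero {y : B} (hy : realSpectralRadius y = 0)
    (hconj : ∀ u : Bˣ, realSpectralRadius (u * y * ↑u⁻¹ - y) = 0) :
    y ∈ (⊥ : TwoSidedIdeal B).jacobson := by
  rw [← TwoSidedIdeal.mem_asIdeal, TwoSidedIdeal.asIdeal_jacobson, Ideal.jacobson, Ideal.mem_sInf]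
  rintro L ⟨-, hL⟩
  by_cases hmul : ∀ ℓ ∈ L, ℓ * y ∈ L
  · obtain ⟨μ, hμ⟩ := exists_sub_algebraMap_mem_of_forall_mul_mem hmul
    have hμ0 : μ = 0 := norm_le_zero_iff.mp <|
      hy ▸ norm_le_realSpectralRadius (mem_spectrum_of_sub_algebraMap_mem hL.ne_top hμ)
    simpa [hμ0] using hμ
  · obtain ⟨ℓ, hℓ, hℓy⟩ := not_forall₂.mp hmul
    obtain ⟨u, hu⟩ := exists_units_realSpectralRadius_conj_sub_pos hℓ hℓy
    exact absurd (hconj u) hu.ne'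

theorem separatingSpace_subset_jacobson {T : A →ₗ[ℂ] B} (hsurj : Function.Surjective T)
    {M : ℝ≥0} (hsb : ∀ x, realSpectralRadius (T x) ≤ M * realSpectralRadius x) :
    separatingSpace T ⊆ ((⊥ : TwoSidedIdeal B).jacobson : Set B) := by
  intro y hy
  have hbound (a : A) (z : ℂ) : realSpectralRadius (T a + z • y) ≤ M * realSpectralRadius a :=
    realSpectralRadius_add_le_of_mem_separatingSpace hsb (smul_mem_separatingSpace hy z)
      (hsurj _) a
  have hy0 : realSpectralRadius y = 0 :=
    le_antisymm (by simpa using hbound 0 1) (realSpectralRadius_nonneg y)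
  refine mem_jacobson_of_realSpectralRadius_eq_zero hy0 fun u =>
    le_antisymm ?_ (realSpectralRadius_nonneg _)
  obtain ⟨a, ha⟩ := hsurj (u * y * ↑u⁻¹)
  have := realSpectralRadius_add_le_of_forall_le (b := u * y * ↑u⁻¹) (y := -y)
    fun z => by simpa [ha] using hbound a (-z)
  simpa [sub_eq_add_neg, hy0] using this

end Jacobson

end SpectrallyBounded

open SpectrallyBounded in
/-- Aupetit's theorem: the separating space of a surjective spectrally bounded operator
between Banach algebras is contained in the Jacobson radical of the codomain; in particular
if the codomain is semisimple then the operator is continuous. -/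
theorem separating_space_subset_radical_of_spectrally_bounded
    {A B : Type*}
    [NormedRing A] [NormedAlgebra ℂ A] [CompleteSpace A] [NormOneClass A]
    [NormedRing B] [NormedAlgebra ℂ B] [CompleteSpace B] [NormOneClass B]
    (T : A →ₗ[ℂ] B) (hsurj : Function.Surjective T) (M : ℝ≥0)
    (hsb : ∀ x : A, spectralRadius ℂ (T x) ≤ (M : ℝ≥0∞) * spectralRadius ℂ x) :
    (∀ y : B, (∃ x : ℕ → A, Filter.Tendsto x Filter.atTop (𝓝 0) ∧
        Filter.Tendsto (fun n => T (x n)) Filter.atTop (𝓝 y)) →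
      y ∈ (⊥ : TwoSidedIdeal B).jacobson) ∧
    ((⊥ : TwoSidedIdeal B).jacobson = ⊥ → Continuous T) := by
  have hsub := separatingSpace_subset_jacobson hsurj
    fun x => realSpectralRadius_le_mul_of_spectralRadius_le (hsb x)
  refine ⟨fun y hy => hsub hy, fun hrad => continuous_of_separatingSpace_subset T ?_⟩
  rw [hrad] at hsub
  simpa using hsub
end

section
/- Every unital surjective numerical-radius-preserving linear operator T between two unital C*-algebras A and B maps self-adjoint elements to self-adjoint elements. Concretely: if ν(Tx) = ν(x) for all x ∈ A, T1 = 1, and T is surjective, then T(A_sa) ⊆ B_sa. -/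
open ComplexOrder

/-- A state on a unital C*-algebra: a positive linear functional of norm one. -/
def IsState {A : Type*} [NormedRing A] [StarRing A] [NormedAlgebra ℂ A]
    (φ : A →L[ℂ] ℂ) : Prop :=
  ‖φ‖ = 1 ∧ ∀ a : A, 0 ≤ φ (star a * a)

/-- The numerical radius `ν(x) = sup {|φ(x)| : φ a state}`. -/
noncomputable def numRadius {A : Type*} [NormedRing A] [StarRing A] [NormedAlgebra ℂ A]
    (x : A) : ℝ :=
  ⨆ φ : {φ : A →L[ℂ] ℂ // IsState φ}, ‖(φ : A →L[ℂ] ℂ) x‖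

/-! Write `T a = b + i c` with `b, c` self-adjoint and pick a state `ψ` of `B` with
`|ψ c| = ‖c‖`. Since `|ψ (T x)| ≤ ν(T x) = ν(x) ≤ ‖x‖` and `ψ (T 1) = 1`, the functional
`ψ ∘ T` is a unital contraction of `A`. A unital contraction `f` is real on self-adjoint
elements, because `|f a + i t|² ≤ ‖a + i t‖² ≤ ‖a‖² + t²` for every real `t`. Hence
`ψ c = Im ψ (T a) = 0`, so `c = 0`. -/

open Complex

section NumRadius

variable {A : Type*} [NormedRing A] [StarRing A] [NormedAlgebra ℂ A]

lemma IsState.norm_apply_le {φ : A →L[ℂ] ℂ} (hφ : IsState φ) (x : A) : ‖φ x‖ ≤ ‖x‖ := by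
  simpa [hφ.1] using φ.le_opNorm x

lemma IsState.norm_apply_le_numRadius {φ : A →L[ℂ] ℂ} (hφ : IsState φ) (x : A) :
    ‖φ x‖ ≤ numRadius x :=
  le_ciSup (f := fun ψ : {ψ : A →L[ℂ] ℂ // IsState ψ} => ‖(ψ : A →L[ℂ] ℂ) x‖)
    ⟨‖x‖, by rintro _ ⟨ψ, rfl⟩; exact ψ.2.norm_apply_le x⟩ ⟨φ, hφ⟩

lemma numRadius_le_norm (x : A) : numRadius x ≤ ‖x‖ :=
  Real.iSup_le (fun φ => φ.2.norm_apply_le x) (norm_nonneg x)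

end NumRadius

lemma eq_zero_of_forall_mul_le {y C : ℝ} (h : ∀ t, y * t ≤ C) : y = 0 := by
  by_contra hy
  have := h ((C + 1) / y)
  rw [mul_div_cancel₀ _ hy] at this
  linarith

section CStarRing

variable {A : Type*} [NormedRing A] [StarRing A] [CStarRing A] [NormedAlgebra ℂ A]
  [StarModule ℂ A] [NormOneClass A]

lemma IsSelfAdjoint.norm_add_smul_one_sq_le {a : A} (ha : IsSelfAdjoint a) (t : ℝ) :
    ‖a + (t * I) • (1 : A)‖ ^ 2 ≤ ‖a‖ ^ 2 + t ^ 2 := by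
  have hstar : star ((t * I) • (1 : A)) = -((t * I) • 1) := by
    simp [star_smul, ← neg_smul]
  have hmul : star (a + (t * I) • (1 : A)) * (a + (t * I) • 1) = a * a + (t ^ 2 : ℂ) • 1 := by
    rw [star_add, ha.star_eq, hstar]
    have hI : (t * I) * (t * I) = -(t ^ 2 : ℂ) := by ring_nf; simp
    simp only [add_mul, mul_add, neg_mul, smul_mul_assoc, mul_smul_comm, one_mul, mul_one,
      smul_add, smul_neg, smul_smul, hI]
    module
  calc ‖a + (t * I) • (1 : A)‖ ^ 2 = ‖a * a + (t ^ 2 : ℂ) • (1 : A)‖ := by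
        rw [← hmul, CStarRing.norm_star_mul_self, sq]
    _ ≤ ‖a * a‖ + ‖(t ^ 2 : ℂ) • (1 : A)‖ := norm_add_le _ _
    _ = ‖a‖ ^ 2 + t ^ 2 := by
        rw [ha.norm_mul_self, norm_smul, norm_one, mul_one]
        norm_cast
        simp

lemma LinearMap.im_apply_eq_zero_of_isSelfAdjoint (f : A →ₗ[ℂ] ℂ) (hf : ∀ x, ‖f x‖ ≤ ‖x‖)
    (h1 : f 1 = 1) {a : A} (ha : IsSelfAdjoint a) : (f a).im = 0 := by
  suffices ∀ t : ℝ, 2 * (f a).im * t ≤ ‖a‖ ^ 2 by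
    simpa using eq_zero_of_forall_mul_le this
  intro t
  have hval : f (a + (t * I) • (1 : A)) = f a + t * I := by simp [h1]
  have hnorm : ‖f a + t * I‖ ^ 2 = (f a).re ^ 2 + ((f a).im + t) ^ 2 := by
    rw [Complex.sq_norm, normSq_apply]; simp; ring
  have := pow_le_pow_left₀ (norm_nonneg _) (hval ▸ hf (a + (t * I) • (1 : A))) 2
  nlinarith [ha.norm_add_smul_one_sq_le t, sq_nonneg (f a).re, sq_nonneg (f a).im]

end CStarRing

section CStarAlgebra

variable {A : Type*} [NormedRing A] [StarRing A] [CStarRing A] [NormedAlgebra ℂ A]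
  [StarModule ℂ A] [NormOneClass A] [CompleteSpace A]

-- Mathlib's order and Gelfand theory on C⋆-algebras are stated for the bundled class.
abbrev CStarAlgebra.ofCStarRing : CStarAlgebra A :=
  { ‹NormedRing A›, ‹StarRing A›, ‹CStarRing A›, ‹NormedAlgebra ℂ A›, ‹StarModule ℂ A›,
    ‹CompleteSpace A› with }

lemma ContinuousLinearMap.re_apply_star_mul_self_nonneg {f : A →L[ℂ] ℂ} (hf : ‖f‖ ≤ 1)
    (h1 : f 1 = 1) (b : A) : 0 ≤ (f (star b * b)).re := by
  let := CStarAlgebra.ofCStarRing (A := A)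
  let := CStarAlgebra.spectralOrder A
  have := CStarAlgebra.spectralOrderedRing A
  set a := star b * b
  have hbound : ∀ x, ‖f x‖ ≤ ‖x‖ := fun x => f.le_of_opNorm_le hf x |>.trans_eq (one_mul _)
  have ha : 0 ≤ a := star_mul_self_nonneg b
  have hsub : 0 ≤ algebraMap ℝ A ‖a‖ - a := sub_nonneg.2 ha.isSelfAdjoint.le_algebraMap_norm_self
  have hsub_norm : ‖algebraMap ℝ A ‖a‖ - a‖ ≤ ‖a‖ :=
    (CStarAlgebra.norm_le_iff_le_algebraMap _ (norm_nonneg a) hsub).2 (sub_le_self _ ha)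
  have him : (f a).im = 0 :=
    f.toLinearMap.im_apply_eq_zero_of_isSelfAdjoint hbound h1 ha.isSelfAdjoint
  have hval : f (algebraMap ℝ A ‖a‖ - a) = ((‖a‖ - (f a).re : ℝ) : ℂ) := by
    rw [map_sub, Algebra.algebraMap_eq_smul_one, ← Complex.coe_smul, map_smul, h1]
    apply Complex.ext <;> simp [him]
  have := (hbound _).trans hsub_norm
  rw [hval, Complex.norm_real, Real.norm_eq_abs, abs_le] at this
  linarith [this.1]

lemma isState_of_norm_le_one {f : A →L[ℂ] ℂ} (hf : ‖f‖ ≤ 1) (h1 : f 1 = 1) : IsState f := by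
  refine ⟨le_antisymm hf ?_, fun b => ?_⟩
  · simpa [h1] using f.le_opNorm 1
  · have him : (f (star b * b)).im = 0 :=
      f.toLinearMap.im_apply_eq_zero_of_isSelfAdjoint
        (fun x => f.le_of_opNorm_le hf x |>.trans_eq (one_mul _)) h1 (.star_mul_self b)
    exact Complex.le_def.2 ⟨f.re_apply_star_mul_self_nonneg hf h1 b, him.symm⟩

lemma exists_norm_le_one_map_one_apply_eq_of_mem_spectrum {c : A} [IsStarNormal c] {z : ℂ}
    (hz : z ∈ spectrum ℂ c) : ∃ g : A →L[ℂ] ℂ, ‖g‖ ≤ 1 ∧ g 1 = 1 ∧ g c = z := by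
  let := CStarAlgebra.ofCStarRing (A := A)
  let S := StarAlgebra.elemental ℂ c
  obtain ⟨χ, hχ⟩ := (StarAlgebra.elemental.bijective_characterSpaceToSpectrum c).2 ⟨z, hz⟩
  let χ' := (WeakDual.CharacterSpace.toAlgHom χ).toContinuousLinearMap
  let f : (Subalgebra.toSubmodule S.toSubalgebra) →L[ℂ] ℂ := χ'
  obtain ⟨g, hg, hgnorm⟩ := exists_extension_norm_eq _ f
  refine ⟨g, ?_, ?_, ?_⟩
  · exact hgnorm.trans_le (AlgHom.toContinuousLinearMap_norm _).le
  · exact (hg ⟨1, S.one_mem⟩).trans (map_one χ)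
  · exact (hg ⟨c, StarAlgebra.elemental.self_mem ℂ c⟩).trans (congrArg Subtype.val hχ)

lemma IsSelfAdjoint.exists_isState_map_one_norm_apply_eq {c : A} (hc : IsSelfAdjoint c) :
    ∃ φ : A →L[ℂ] ℂ, IsState φ ∧ φ 1 = 1 ∧ ‖φ c‖ = ‖c‖ := by
  let := CStarAlgebra.ofCStarRing (A := A)
  have : Nontrivial A := NormOneClass.nontrivial
  have := hc.isStarNormal
  obtain ⟨z, hz, hz_norm⟩ := spectrum.exists_nnnorm_eq_spectralRadius c
  obtain ⟨φ, hφ, hφ1, hφc⟩ := exists_norm_le_one_map_one_apply_eq_of_mem_spectrum hz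
  refine ⟨φ, isState_of_norm_le_one hφ hφ1, hφ1, ?_⟩
  rw [hc.spectralRadius_eq_nnnorm, ENNReal.coe_inj] at hz_norm
  rw [hφc, ← coe_nnnorm, hz_norm, coe_nnnorm]

end CStarAlgebra

open scoped ComplexStarModule

theorem selfAdjoint_image_of_numRadius_preserving_general
    {A B : Type*}
    [NormedRing A] [StarRing A] [CStarRing A] [NormedAlgebra ℂ A]
    [StarModule ℂ A] [NormOneClass A]
    [NormedRing B] [StarRing B] [CStarRing B] [NormedAlgebra ℂ B] [CompleteSpace B]
    [StarModule ℂ B] [NormOneClass B]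
    (T : A →ₗ[ℂ] B) (hone : T 1 = 1)
    (hnu : ∀ x : A, numRadius (T x) = numRadius x) :
    ∀ a : A, IsSelfAdjoint a → IsSelfAdjoint (T a) := by
  intro a ha
  obtain ⟨ψ, hψ, hψ1, hψ_norm⟩ := (ℑ (T a)).2.exists_isState_map_one_norm_apply_eq
  have hψ_real : ∀ b : B, IsSelfAdjoint b → (ψ b).im = 0 :=
    fun b => ψ.toLinearMap.im_apply_eq_zero_of_isSelfAdjoint hψ.norm_apply_le hψ1
  have hψT : ∀ x, ‖ψ (T x)‖ ≤ ‖x‖ := fun x =>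
    (hψ.norm_apply_le_numRadius (T x)).trans ((hnu x).trans_le (numRadius_le_norm x))
  have him : (ψ (T a)).im = 0 :=
    (ψ.toLinearMap ∘ₗ T).im_apply_eq_zero_of_isSelfAdjoint hψT (by simp [hone, hψ1]) ha
  have hψ_imag : ψ (ℑ (T a)) = 0 := by
    refine Complex.ext ?_ (hψ_real _ (ℑ (T a)).2)
    rw [← realPart_add_I_smul_imaginaryPart (T a), map_add, map_smul] at him
    simpa [hψ_real _ (ℜ (T a)).2] using him
  have hnorm : ‖(ℑ (T a) : B)‖ = 0 := by rw [← hψ_norm, hψ_imag, norm_zero]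
  exact imaginaryPart_eq_zero_iff.1 (Subtype.ext (norm_eq_zero.1 hnorm))

/-- A unital surjective numerical-radius-preserving operator between unital C*-algebras
maps self-adjoint elements to self-adjoint elements. -/
theorem selfAdjoint_image_of_numRadius_preserving
    {A B : Type*}
    [NormedRing A] [StarRing A] [CStarRing A] [NormedAlgebra ℂ A] [CompleteSpace A]
    [StarModule ℂ A] [NormOneClass A]
    [NormedRing B] [StarRing B] [CStarRing B] [NormedAlgebra ℂ B] [CompleteSpace B]
    [StarModule ℂ B] [NormOneClass B]
    (T : A →ₗ[ℂ] B) (hone : T 1 = 1) (hsurj : Function.Surjective T)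
    (hnu : ∀ x : A, numRadius (T x) = numRadius x) :
    ∀ a : A, IsSelfAdjoint a → IsSelfAdjoint (T a) :=
  selfAdjoint_image_of_numRadius_preserving_general T hone hnu
end

section
/- Let A be a II₁ factor (or Mₙ(ℂ) with n ≥ 2) with normalized (center-valued, hence scalar) trace τ. Suppose a unital surjective linear map T : A → A admits two representations Tx = γ·Sx + (1−γ)·τ(x)·1 = γ'·S'x + (1−γ')·τ(x)·1 for all x ∈ A, where γ, γ' ∈ ℂ \ {0} and S, S' are spectrum-preserving Jordan automorphisms, and suppose A contains a projection p with τ(p) = 1/3. Then γ = γ' and S = S'. -/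
/-! The element `x = 3p - 1` is traceless, so the two representations of `T` give
`γ • S x = γ' • S' x`. As `S` and `S'` preserve spectra, taking spectra yields
`γ • {-1, 2} = γ' • {-1, 2}`, which forces `γ = γ'`; then `S = S'` follows by cancelling `γ`
in the two representations. -/

open scoped Pointwise

section

variable {𝕜 A : Type*} [Field 𝕜] [Ring A] [Algebra 𝕜 A]

theorem IsIdempotentElem.spectrum_eq {p : A} (hp : IsIdempotentElem p) (hp0 : p ≠ 0)
    (hp1 : p ≠ 1) : spectrum 𝕜 p = {0, 1} := by
  refine (hp.spectrum_subset 𝕜).antisymm ?_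
  rintro _ (rfl | rfl)
  · exact spectrum.zero_mem_iff 𝕜 |>.mpr fun hu =>
      hp1 <| (IsIdempotentElem.iff_eq_one_of_isUnit hu).mp hp
  · rw [spectrum.mem_iff, map_one]
    refine fun hu => hp0 ?_
    simpa using (IsIdempotentElem.iff_eq_one_of_isUnit hu).mp hp.one_sub

theorem IsIdempotentElem.spectrum_three_smul_sub_one {p : A} (hp : IsIdempotentElem p)
    (hp0 : p ≠ 0) (hp1 : p ≠ 1) : spectrum 𝕜 ((3 : 𝕜) • p - 1) = {-1, 2} := by
  have : Nontrivial A := ⟨⟨p, 0, hp0⟩⟩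
  have hσp := hp.spectrum_eq (𝕜 := 𝕜) hp0 hp1
  rw [← map_one (algebraMap 𝕜 A), ← spectrum.sub_singleton_eq,
    spectrum.smul_eq_smul _ _ (hσp ▸ Set.insert_nonempty _ _), hσp]
  simp only [Set.smul_set_insert, Set.smul_set_singleton, Set.sub_singleton, Set.image_insert_eq,
    Set.image_singleton]
  norm_num

end

theorem eq_of_smul_pair_subset {𝕜 : Type*} [Field 𝕜] [CharZero 𝕜] {a b : 𝕜}
    (h : a • ({-1, 2} : Set 𝕜) ⊆ b • {-1, 2}) : a = b := by
  have hneg : -a ∈ b • ({-1, 2} : Set 𝕜) := h ⟨-1, by simp, by simp⟩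
  have htwo : 2 * a ∈ b • ({-1, 2} : Set 𝕜) := h ⟨2, by simp, by simp [mul_comm]⟩
  simp only [Set.smul_set_insert, Set.smul_set_singleton, smul_eq_mul, Set.mem_insert_iff,
    Set.mem_singleton_iff] at hneg htwo
  rcases hneg with hneg | hneg
  · linear_combination -hneg
  rcases htwo with htwo | htwo
  · linear_combination hneg + htwo
  · linear_combination htwo / 2

theorem canonical_representation_unique_general
    {A : Type*}
    [NormedRing A] [NormedAlgebra ℂ A]
    (τ : A →ₗ[ℂ] ℂ) (hτ1 : τ 1 = 1)
    (p : A) (hpidem : IsIdempotentElem p) (hτp : τ p = 1 / 3)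
    (T S S' : A →ₗ[ℂ] A)
    (hSspec : ∀ x : A, spectrum ℂ (S x) = spectrum ℂ x)
    (hS'spec : ∀ x : A, spectrum ℂ (S' x) = spectrum ℂ x)
    (γ γ' : ℂ) (hγ : γ ≠ 0)
    (hrep : ∀ x : A, T x = γ • S x + ((1 - γ) * τ x) • (1 : A))
    (hrep' : ∀ x : A, T x = γ' • S' x + ((1 - γ') * τ x) • (1 : A)) :
    γ = γ' ∧ S = S' := by
  have hp0 : p ≠ 0 := by rintro rfl; norm_num at hτp
  have hp1 : p ≠ 1 := by rintro rfl; norm_num [hτ1] at hτp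
  have : Nontrivial A := ⟨⟨p, 0, hp0⟩⟩
  set x : A := (3 : ℂ) • p - 1
  have hσx : spectrum ℂ x = {-1, 2} := hpidem.spectrum_three_smul_sub_one hp0 hp1
  have hτx : τ x = 0 := by simp [x, hτp, hτ1]
  have hx : γ • S x = γ' • S' x := by simpa [hτx] using (hrep x).symm.trans (hrep' x)
  have hσ_smul (c : ℂ) (R : A →ₗ[ℂ] A) (hR : ∀ y, spectrum ℂ (R y) = spectrum ℂ y) :
      spectrum ℂ (c • R x) = c • {-1, 2} := by
    rw [spectrum.smul_eq_smul _ _ (by simp [hR, hσx]), hR, hσx]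
  have hγγ' : γ = γ' :=
    eq_of_smul_pair_subset (by rw [← hσ_smul γ S hSspec, ← hσ_smul γ' S' hS'spec, hx])
  refine ⟨hγγ', LinearMap.ext fun y => smul_right_injective A hγ ?_⟩
  simpa [hγγ'] using (hrep y).symm.trans (hrep' y)

/-- Uniqueness of the canonical representation `Tx = γ Sx + (1-γ) τ(x) 1` of a unital
surjective linear map on an algebra with a normalised trace possessing a projection of
trace `1/3` (e.g. a II₁ factor or `Mₙ(ℂ)`, `n ≥ 2`). -/
theorem canonical_representation_unique
    {A : Type*}
    [NormedRing A] [StarRing A] [CStarRing A] [NormedAlgebra ℂ A] [CompleteSpace A]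
    [StarModule ℂ A] [NormOneClass A]
    (τ : A →ₗ[ℂ] ℂ) (hτ1 : τ 1 = 1) (hτtr : ∀ x y : A, τ (x * y) = τ (y * x))
    (p : A) (hpsa : IsSelfAdjoint p) (hpidem : IsIdempotentElem p) (hτp : τ p = 1 / 3)
    (T S S' : A →ₗ[ℂ] A)
    (hone : T 1 = 1) (hsurj : Function.Surjective T)
    (hSbij : Function.Bijective S) (hS'bij : Function.Bijective S')
    (hSJ : ∀ x y : A, S (x * y + y * x) = S x * S y + S y * S x)
    (hS'J : ∀ x y : A, S' (x * y + y * x) = S' x * S' y + S' y * S' x)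
    (hSspec : ∀ x : A, spectrum ℂ (S x) = spectrum ℂ x)
    (hS'spec : ∀ x : A, spectrum ℂ (S' x) = spectrum ℂ x)
    (γ γ' : ℂ) (hγ : γ ≠ 0) (hγ' : γ' ≠ 0)
    (hrep : ∀ x : A, T x = γ • S x + ((1 - γ) * τ x) • (1 : A))
    (hrep' : ∀ x : A, T x = γ' • S' x + ((1 - γ') * τ x) • (1 : A)) :
    γ = γ' ∧ S = S' :=
  canonical_representation_unique_general τ hτ1 p hpidem hτp T S S' hSspec hS'spec γ γ' hγ hrep
    hrep'
end

section
/- Let B be a complex Banach algebra and b ∈ B such that r(b + y) = r(y) for all y ∈ B, where r is the spectral radius. Then b belongs to the Jacobson radical of B; in particular, if for some b ∈ B the function λ ↦ r(λb + y) is constant in λ ∈ ℂ for every y ∈ B, then b ∈ rad(B). -/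
open scoped ENNReal

section Aux

variable {B : Type*} [NormedRing B] [NormedAlgebra ℂ B] [CompleteSpace B] [NormOneClass B]

/-- From `spectralRadius = 0`, powers are eventually small in norm. -/
lemma zem_exists_pow_norm_lt (a : B) (ha : spectralRadius ℂ a = 0) {ε : ℝ} (hε : 0 < ε) :
    ∃ n : ℕ, 1 ≤ n ∧ ‖a ^ n‖ < ε ^ n := by
  have h := spectrum.pow_nnnorm_pow_one_div_tendsto_nhds_spectralRadius a
  rw [ha] at h
  have h2 : ∀ᶠ n : ℕ in Filter.atTop,
      (‖a ^ n‖₊ : ℝ≥0∞) ^ (1 / (n : ℝ)) < ENNReal.ofReal ε :=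
    h.eventually_lt_const (by simpa using ENNReal.ofReal_pos.2 hε)
  obtain ⟨n, hn1, hn2⟩ := (h2.and (Filter.eventually_ge_atTop 1)).exists
  refine ⟨n, hn2, ?_⟩
  have hnne : (n : ℝ) ≠ 0 := by positivity
  have h3 : ((‖a ^ n‖₊ : ℝ≥0∞) ^ (1 / (n : ℝ))) ^ (n : ℝ) < (ENNReal.ofReal ε) ^ (n : ℝ) :=
    ENNReal.rpow_lt_rpow hn1 (by positivity)
  rw [← ENNReal.rpow_mul, one_div, inv_mul_cancel₀ hnne, ENNReal.rpow_one] at h3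
  rw [ENNReal.rpow_natCast, ← ENNReal.ofReal_pow hε.le] at h3
  rw [← ENNReal.ofReal_lt_ofReal_iff (by positivity), ofReal_norm, enorm_eq_nnnorm]
  exact h3

/-- Quasinilpotency passes from `t • a` to `a` for `t ≠ 0`. -/
lemma zem_radius_zero_of_smul {a : B} {t : ℂ} (ht : t ≠ 0)
    (h : spectralRadius ℂ (t • a) = 0) : spectralRadius ℂ a = 0 := by
  have hsub : spectrum ℂ a ⊆ {0} := by
    intro μ hμ
    have hmem : t • μ ∈ spectrum ℂ (t • a) := by
      have h1 : (Units.mk0 t ht) • μ ∈ spectrum ℂ ((Units.mk0 t ht) • a) :=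
        spectrum.smul_mem_smul_iff.mpr hμ
      simpa [Units.smul_def] using h1
    have : (‖t • μ‖₊ : ℝ≥0∞) ≤ spectralRadius ℂ (t • a) :=
      le_iSup₂ (α := ℝ≥0∞) (t • μ) hmem
    rw [h, nonpos_iff_eq_zero] at this
    have h0 : t • μ = 0 := by simpa using this
    have h0' : t * μ = 0 := h0
    rcases mul_eq_zero.mp h0' with h | h
    · exact absurd h ht
    · exact h
  refine le_antisymm ?_ zero_le
  refine iSup₂_le fun k hk => ?_
  have : k = 0 := hsub hk
  simp [this]

/-- The analytic core: all commutators with `b` are quasinilpotent. -/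
lemma zem_commutator_radius_zero (b : B)
    (H : ∀ y : B, spectralRadius ℂ (b + y) = spectralRadius ℂ y) (x : B) :
    spectralRadius ℂ (x * b - b * x) = 0 := by
  have hb : spectralRadius ℂ b = 0 := by simpa using H 0
  set c : B := x * b - b * x with hc
  set R : ℝ := (2 * (‖x‖ + 1))⁻¹ with hR
  have hRpos : 0 < R := by rw [hR]; positivity
  have hRx : R * ‖x‖ < 1 := by
    rw [hR, inv_mul_lt_iff₀ (by positivity)]
    nlinarith [norm_nonneg x]
  set F : ℂ → B := fun t => c * Ring.inverse (1 + t • x) with hF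
  -- units
  have hnorm_smul : ∀ s : ℂ, ‖s‖ * ‖x‖ < 1 → ‖-(s • x)‖ < 1 := by
    intro s hs
    rwa [norm_neg, norm_smul]
  have hval : ∀ (s : ℂ) (hs : ‖s‖ * ‖x‖ < 1),
      ((Units.oneSub (-(s • x)) (hnorm_smul s hs) : Bˣ) : B) = 1 + s • x := by
    intro s hs
    rw [Units.val_oneSub, sub_neg_eq_add]
  have hFinv : ∀ (s : ℂ) (hs : ‖s‖ * ‖x‖ < 1),
      F s = c * ((Units.oneSub (-(s • x)) (hnorm_smul s hs))⁻¹ : Bˣ) := by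
    intro s hs
    rw [hF]
    simp only
    rw [← Ring.inverse_unit (Units.oneSub (-(s • x)) (hnorm_smul s hs)), hval s hs]
  -- the key identity : s • F s = u * b * u⁻¹ - b
  have hkey : ∀ (s : ℂ) (hs : ‖s‖ * ‖x‖ < 1),
      s • F s = ((Units.oneSub (-(s • x)) (hnorm_smul s hs) : Bˣ) : B) * b *
        ((Units.oneSub (-(s • x)) (hnorm_smul s hs))⁻¹ : Bˣ) - b := by
    intro s hs
    set u : Bˣ := Units.oneSub (-(s • x)) (hnorm_smul s hs) with hu
    have h1 : (u : B) * b - b * (u : B) = s • c := by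
      rw [hval s hs, hc]
      rw [add_mul, mul_add, one_mul, mul_one, smul_mul_assoc, mul_smul_comm, smul_sub]
      abel
    have h2 : (u : B) * b * ((u⁻¹ : Bˣ) : B) - b
        = ((u : B) * b - b * (u : B)) * ((u⁻¹ : Bˣ) : B) := by
      rw [sub_mul, Units.mul_inv_cancel_right]
    rw [h2, h1, hFinv s hs, smul_mul_assoc]
  -- quasinilpotency on the punctured disk
  have hq : ∀ (s : ℂ), s ≠ 0 → ∀ (hs : ‖s‖ * ‖x‖ < 1), spectralRadius ℂ (F s) = 0 := by
    intro s hs0 hs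
    set u : Bˣ := Units.oneSub (-(s • x)) (hnorm_smul s hs) with hu
    have h3 : spectralRadius ℂ ((u : B) * b * ((u⁻¹ : Bˣ) : B)) = spectralRadius ℂ b := by
      unfold spectralRadius
      rw [spectrum.units_conjugate]
    have h4 : b + ((u : B) * b * ((u⁻¹ : Bˣ) : B) - b) = (u : B) * b * ((u⁻¹ : Bˣ) : B) := by
      abel
    have h5 := H ((u : B) * b * ((u⁻¹ : Bˣ) : B) - b)
    rw [h4, h3, hb] at h5
    have h6 : spectralRadius ℂ (s • F s) = 0 := by rw [hkey s hs]; exact h5.symm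
    exact zem_radius_zero_of_smul hs0 h6
  -- differentiability
  have hdiff : ∀ s : ℂ, ‖s‖ * ‖x‖ < 1 → DifferentiableAt ℂ F s := by
    intro s hs
    have hgd : DifferentiableAt ℂ (fun t : ℂ => 1 + t • x) s :=
      (differentiableAt_const (1 : B)).add (differentiableAt_id.smul_const x)
    have hunit : IsUnit (1 + s • x) := by
      rw [← hval s hs]; exact Units.isUnit _
    exact (differentiableAt_const c).mul (hgd.inverse hunit)
  have hcont : ∀ n : ℕ, ContinuousOn (fun s : ℂ => ‖F s ^ n‖) {s : ℂ | ‖s‖ * ‖x‖ < 1} := by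
    intro n
    intro s hs
    exact (((hdiff s hs).pow n).continuousAt.continuousWithinAt).norm
  have hVopen : IsOpen {s : ℂ | ‖s‖ * ‖x‖ < 1} := by
    have : Continuous fun s : ℂ => ‖s‖ * ‖x‖ := continuous_norm.mul continuous_const
    exact isOpen_lt this continuous_const
  have hball : ∀ s : ℂ, s ∈ Metric.closedBall (0 : ℂ) R → ‖s‖ * ‖x‖ < 1 := by
    intro s hmem
    rw [Metric.mem_closedBall, dist_zero_right] at hmem
    calc ‖s‖ * ‖x‖ ≤ R * ‖x‖ := mul_le_mul_of_nonneg_right hmem (norm_nonneg x)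
      _ < 1 := hRx
  -- main estimate : for every ε > 0, spectralRadius c ≤ ofReal ε
  have hmain : ∀ ε : ℝ, 0 < ε → spectralRadius ℂ c ≤ ENNReal.ofReal ε := by
    intro ε hε
    -- open cover of the sphere
    set O : ℕ → Set ℂ := fun n =>
      {s : ℂ | ‖s‖ * ‖x‖ < 1} ∩ (fun s : ℂ => ‖F s ^ (n + 1)‖) ⁻¹' Set.Iio (ε ^ (n + 1))
      with hO
    have hOopen : ∀ n, IsOpen (O n) := by
      intro n
      exact (hcont (n + 1)).isOpen_inter_preimage hVopen isOpen_Iio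
    have hcover : Metric.sphere (0 : ℂ) R ⊆ ⋃ n, O n := by
      intro t ht
      rw [Metric.mem_sphere, dist_zero_right] at ht
      have ht0 : t ≠ 0 := by
        intro h0
        rw [h0, norm_zero] at ht
        exact hRpos.ne' ht.symm
      have htx : ‖t‖ * ‖x‖ < 1 := by rw [ht]; exact hRx
      obtain ⟨n, hn1, hn2⟩ := zem_exists_pow_norm_lt (F t) (hq t ht0 htx) hε
      refine Set.mem_iUnion.2 ⟨n - 1, htx, ?_⟩
      have : n - 1 + 1 = n := by omega
      simpa [this] using hn2
    obtain ⟨I, hI⟩ := (isCompact_sphere (0 : ℂ) R).elim_finite_subcover O hOopen hcover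
    set N : ℕ := ∏ i ∈ I, (i + 1) with hNdef
    have hN1 : 1 ≤ N := Finset.one_le_prod' fun i _ => Nat.succ_le_succ (Nat.zero_le i)
    -- boundary bound
    have hbound : ∀ t ∈ Metric.sphere (0 : ℂ) R, ‖F t ^ N‖ ≤ ε ^ N := by
      intro t ht
      obtain ⟨i, hiI, hti⟩ := Set.mem_iUnion₂.1 (hI ht)
      obtain ⟨-, hti2⟩ := hti
      have hdvd : (i + 1) ∣ N := Finset.dvd_prod_of_mem _ hiI
      obtain ⟨m, hm⟩ := hdvd
      have hm0 : m ≠ 0 := by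
        intro h0
        rw [h0, mul_zero] at hm
        omega
      have hlt : ‖F t ^ (i + 1)‖ < ε ^ (i + 1) := hti2
      calc ‖F t ^ N‖ = ‖(F t ^ (i + 1)) ^ m‖ := by rw [← pow_mul, ← hm]
        _ ≤ ‖F t ^ (i + 1)‖ ^ m := norm_pow_le' _ (Nat.pos_of_ne_zero hm0)
        _ ≤ (ε ^ (i + 1)) ^ m := pow_le_pow_left₀ (norm_nonneg _) hlt.le m
        _ = ε ^ N := by rw [← pow_mul, ← hm]
    -- maximum modulus principle
    have hdiffcl : DiffContOnCl ℂ (fun t : ℂ => F t ^ N) (Metric.ball (0 : ℂ) R) := by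
      refine DifferentiableOn.diffContOnCl ?_
      rw [closure_ball (0 : ℂ) hRpos.ne']
      intro s hsmem
      exact ((hdiff s (hball s hsmem)).pow N).differentiableWithinAt
    have hmax : ‖F 0 ^ N‖ ≤ ε ^ N := by
      refine Complex.norm_le_of_forall_mem_frontier_norm_le
        Metric.isBounded_ball hdiffcl ?_ ?_
      · intro z hz
        rw [frontier_ball (0 : ℂ) hRpos.ne'] at hz
        exact hbound z hz
      · rw [closure_ball (0 : ℂ) hRpos.ne']
        exact Metric.mem_closedBall_self hRpos.le
    have hF0 : F 0 = c := by
      rw [hF]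
      simp
    rw [hF0] at hmax
    -- convert to a spectral radius bound
    have hsr := spectrum.spectralRadius_le_pow_nnnorm_pow_one_div ℂ c (N - 1)
    have hNn : N - 1 + 1 = N := by omega
    have hNr : ((N - 1 : ℕ) : ℝ) + 1 = (N : ℝ) := by
      exact_mod_cast congrArg (Nat.cast : ℕ → ℝ) hNn
    rw [hNn, hNr] at hsr
    have h1 : (‖(1 : B)‖₊ : ℝ≥0∞) = 1 := by simp
    rw [h1, ENNReal.one_rpow, mul_one] at hsr
    refine hsr.trans ?_
    have h2 : (‖c ^ N‖₊ : ℝ≥0∞) ≤ ENNReal.ofReal (ε ^ N) := by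
      rw [← enorm_eq_nnnorm, ← ofReal_norm]
      exact ENNReal.ofReal_le_ofReal hmax
    calc (‖c ^ N‖₊ : ℝ≥0∞) ^ (1 / (N : ℝ))
        ≤ (ENNReal.ofReal (ε ^ N)) ^ (1 / (N : ℝ)) :=
          ENNReal.rpow_le_rpow h2 (by positivity)
      _ = ENNReal.ofReal ((ε ^ N) ^ (1 / (N : ℝ))) := by
          rw [← ENNReal.ofReal_rpow_of_pos (by positivity)]
      _ = ENNReal.ofReal ε := by
          congr 1
          rw [← Real.rpow_natCast ε N, ← Real.rpow_mul hε.le]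
          rw [mul_one_div, div_self (by positivity : (N : ℝ) ≠ 0), Real.rpow_one]
  -- conclude
  refine le_antisymm ?_ zero_le
  refine ENNReal.le_of_forall_pos_le_add fun δ hδ _ => ?_
  rw [zero_add]
  have := hmain δ hδ
  rwa [ENNReal.ofReal_coe_nnreal] at this

/-- Algebraic part: quasinilpotency of `b` and of all commutators implies
left-invertibility of `1 + y * b`. -/
lemma zem_left_inv (b : B) (hb : spectralRadius ℂ b = 0)
    (hcomm : ∀ x : B, spectralRadius ℂ (x * b - b * x) = 0) (y : B) :
    ∃ z : B, z * (1 + y * b) = 1 := by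
  by_contra hno
  push_neg at hno
  set a : B := 1 + y * b with ha
  -- a generates a proper left ideal
  have hI : Ideal.span {a} ≠ (⊤ : Ideal B) := by
    intro htop
    have h1 : (1 : B) ∈ Ideal.span {a} := htop ▸ Submodule.mem_top
    rw [Ideal.span, Submodule.mem_span_singleton] at h1
    obtain ⟨z, hz⟩ := h1
    exact hno z (by simpa [smul_eq_mul] using hz)
  obtain ⟨L, hLmax, hLle⟩ := Ideal.exists_le_maximal _ hI
  have haL : a ∈ L := hLle (Ideal.subset_span rfl)
  -- the linear map `w ↦ w * b`
  let f : B →ₗ[B] B :=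
    { toFun := fun w => w * b
      map_add' := fun u v => add_mul u v b
      map_smul' := fun z w => by simp [smul_eq_mul, mul_assoc] }
  by_cases hJ : L ⊔ Submodule.map f L = ⊤
  · -- Case 1 : `1 = l + x * b` with `l, x ∈ L`.
    have h1 : (1 : B) ∈ L ⊔ Submodule.map f L := hJ ▸ Submodule.mem_top
    rw [Submodule.mem_sup] at h1
    obtain ⟨l, hl, m, hm, hlm⟩ := h1
    obtain ⟨x, hx, rfl⟩ := hm
    have hfx : f x = x * b := rfl
    set s : B := x * b - b * x with hs
    have hsL : s - 1 ∈ L := by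
      have hfx' : f x = x * b := rfl
      rw [hfx'] at hlm
      have hxb1 : x * b - 1 = -l := by rw [← hlm]; noncomm_ring
      have hbx : b * x ∈ L := by
        simpa [smul_eq_mul] using L.smul_mem b hx
      have : s - 1 = -l - b * x := by rw [← hxb1, hs]; noncomm_ring
      rw [this]
      exact sub_mem (neg_mem hl) hbx
    have hpow : ∀ n : ℕ, s ^ n - 1 ∈ L := by
      intro n
      induction n with
      | zero => simpa using L.zero_mem
      | succ n ih =>
        have : s ^ (n + 1) - 1 = s * (s ^ n - 1) + (s - 1) := by
          rw [pow_succ']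
          noncomm_ring
        rw [this]
        exact add_mem (by simpa [smul_eq_mul] using L.smul_mem s ih) hsL
    obtain ⟨n, -, hnorm⟩ := zem_exists_pow_norm_lt (s) (hcomm x) one_pos
    rw [one_pow] at hnorm
    have hunit : IsUnit (1 - s ^ n) := (Units.oneSub (s ^ n) hnorm).isUnit
    have hmem : 1 - s ^ n ∈ L := by
      have := neg_mem (hpow n)
      simpa [neg_sub] using this
    exact hLmax.ne_top (L.eq_top_of_isUnit_mem hmem hunit)
  · -- Case 2 : `L * b ⊆ L`.
    have hLJ : L = L ⊔ Submodule.map f L :=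
      hLmax.eq_of_le hJ le_sup_left
    have hmap : ∀ w ∈ L, w * b ∈ L := by
      intro w hw
      have : f w ∈ L ⊔ Submodule.map f L :=
        Submodule.mem_sup_right (Submodule.mem_map_of_mem hw)
      rw [← hLJ] at this
      exact this
    set c : B := -y with hc
    have hcb : c * b - 1 ∈ L := by
      have : c * b - 1 = -a := by rw [ha, hc]; noncomm_ring
      rw [this]
      exact neg_mem haL
    have hpow : ∀ n : ℕ, 1 ≤ n → c ^ n * b ^ n - 1 ∈ L := by
      intro n hn
      induction n with
      | zero => omega
      | succ n ih =>
        rcases Nat.eq_or_lt_of_le hn with h1 | h1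
        · have he : c ^ 1 * b ^ 1 - 1 = c * b - 1 := by rw [pow_one, pow_one]
          rw [← h1, he]
          exact hcb
        · have hn' : 1 ≤ n := by omega
          have ihn := ih hn'
          have key : c ^ (n + 1) * b ^ (n + 1) - 1
              = c * ((c ^ n * b ^ n - 1) * b) + (c * b - 1) := by
            rw [pow_succ' c, pow_succ b]
            noncomm_ring
          rw [key]
          refine add_mem ?_ hcb
          have := hmap _ ihn
          simpa [smul_eq_mul] using L.smul_mem c this
    -- choose n with ‖c^n * b^n‖ < 1
    have hypos : (0 : ℝ) < (‖y‖ + 1)⁻¹ := by positivity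
    obtain ⟨n, hn1, hnorm⟩ := zem_exists_pow_norm_lt b hb hypos
    have hsmall : ‖c ^ n * b ^ n‖ < 1 := by
      calc ‖c ^ n * b ^ n‖ ≤ ‖c ^ n‖ * ‖b ^ n‖ := norm_mul_le _ _
        _ ≤ ‖c‖ ^ n * ((‖y‖ + 1)⁻¹) ^ n := by
            refine mul_le_mul (norm_pow_le' c (by omega)) hnorm.le (norm_nonneg _) ?_
            positivity
        _ = (‖y‖ * (‖y‖ + 1)⁻¹) ^ n := by rw [← mul_pow, hc, norm_neg]
        _ < 1 := by
            refine pow_lt_one₀ (by positivity) ?_ (by omega)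
            rw [mul_inv_lt_iff₀ (by positivity), one_mul]
            linarith
    have hunit : IsUnit (1 - c ^ n * b ^ n) := (Units.oneSub _ hsmall).isUnit
    have hmem : 1 - c ^ n * b ^ n ∈ L := by
      have := neg_mem (hpow n hn1)
      simpa [neg_sub] using this
    exact hLmax.ne_top (L.eq_top_of_isUnit_mem hmem hunit)

end Aux

/-- Zemánek's characterisation of the Jacobson radical: if `r(b + y) = r(y)` for all `y`
(or, more generally, if `λ ↦ r(λ b + y)` is constant for every `y`), then `b` lies in the
Jacobson radical. -/
theorem mem_jacobson_of_spectralRadius_add_eq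
    {B : Type*} [NormedRing B] [NormedAlgebra ℂ B] [CompleteSpace B] [NormOneClass B]
    (b : B)
    (h : (∀ y : B, spectralRadius ℂ (b + y) = spectralRadius ℂ y) ∨
      (∀ y : B, ∀ lam mu : ℂ,
        spectralRadius ℂ (lam • b + y) = spectralRadius ℂ (mu • b + y))) :
    b ∈ (⊥ : TwoSidedIdeal B).jacobson := by
  -- reduce to the first hypothesis
  have H : ∀ y : B, spectralRadius ℂ (b + y) = spectralRadius ℂ y := by
    rcases h with h | h
    · exact h
    · intro y
      have := h y 1 0
      simpa using this
  have hb : spectralRadius ℂ b = 0 := by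
    have := H 0
    simpa using this
  have hcomm := zem_commutator_radius_zero b H
  rw [TwoSidedIdeal.mem_jacobson_iff]
  intro y
  obtain ⟨z, hz⟩ := zem_left_inv b hb hcomm y
  refine ⟨z, ?_⟩
  rw [TwoSidedIdeal.mem_bot]
  have : z * (1 + y * b) = z + z * y * b := by noncomm_ring
  rw [this] at hz
  rw [← hz]; noncomm_ring
end
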